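/- Let P be a caterpillar Datalog program over a type σ, and let (C, {ρ₁}, T) be the nondeterministic automaton over σ₂ whose states are the IDBs of P, with a transition (ρ_j, ρ_i) ∈ R^(n,m)(C) for each rule deriving a ∈ ρ_i from b ∈ ρ_j and a tuple in R whose m-th coordinate is a and n-th coordinate is b, with initial state ρ₁ and terminal states those IDBs appearing in goal rules. Then for every σ-structure B, the program P achieves its goal on B if and only if some word w accepted by (C, {ρ₁}, T) describes a caterpillar β*(P_w) admitting a homomorphism to B. -/

import Mathlib

/-! Basic framework: relational structures of a finite type `σ` with arities `ar`,
homomorphisms, the binary type/alphabet `σ₂`, the functors `β` and `β*`,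
path structures `P_w`, nondeterministic acceptance, and caterpillar notions. -/

/-- A `σ`-structure: a finite universe together with an `ar R`-ary relation for each `R ∈ σ`. -/
structure Str (σ : Type) (ar : σ → ℕ) : Type 1 where
  V : Type
  finiteV : Finite V
  rel : ∀ R : σ, Set ((Fin (ar R)) → V)

/-- The alphabet (and binary type) `σ₂`: a symbol `R^(i,j)` for each `R ∈ σ` of arity `k`
and each `(i,j) ∈ {1,…,k}²`. -/
abbrev Sig2 (σ : Type) (ar : σ → ℕ) : Type := Σ R : σ, Fin (ar R) × Fin (ar R)

/-- A `σ₂`-structure: a finite universe with a binary relation for each symbol of `σ₂`. -/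
structure Str2 (σ : Type) (ar : σ → ℕ) : Type 1 where
  V : Type
  finiteV : Finite V
  rel : Sig2 σ ar → Set (V × V)

variable {σ : Type} [Finite σ] {ar : σ → ℕ}

/-- Existence of a homomorphism between `σ`-structures. -/
def Str.Hom (A B : Str σ ar) : Prop :=
  ∃ f : A.V → B.V, ∀ (R : σ) (t : Fin (ar R) → A.V), t ∈ A.rel R → (fun i => f (t i)) ∈ B.rel R

/-- Existence of a homomorphism between `σ₂`-structures. -/
def Str2.Hom (X Y : Str2 σ ar) : Prop :=
  ∃ f : X.V → Y.V, ∀ (s : Sig2 σ ar) (p : X.V × X.V), p ∈ X.rel s → (f p.1, f p.2) ∈ Y.rel s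

/-- Isomorphism of `σ`-structures. -/
def Str.Iso (A B : Str σ ar) : Prop :=
  ∃ f : A.V ≃ B.V, ∀ (R : σ) (t : Fin (ar R) → A.V), t ∈ A.rel R ↔ (fun i => f (t i)) ∈ B.rel R

/-- The functor `β`: same universe, `(x_i, x_j) ∈ R^(i,j)(β B)` for each `(x_1,…,x_k) ∈ R(B)`. -/
def strBeta (B : Str σ ar) : Str2 σ ar where
  V := B.V
  finiteV := B.finiteV
  rel := fun s => { p | ∃ t ∈ B.rel s.1, t s.2.1 = p.1 ∧ t s.2.2 = p.2 }

/-- The carrier of `β*(X)⁺`: a copy of each element of `X` together with fresh elements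
`x_1, …, x_k` for each `(x,y) ∈ R^(i,j)(X)`. -/
abbrev PlusCarrier (X : Str2 σ ar) : Type :=
  X.V ⊕ Σ s : Sig2 σ ar, { p : X.V × X.V // p ∈ X.rel s } × Fin (ar s.1)

/-- The identifications generating `∼`: for `(x,y) ∈ R^(i,j)(X)`, identify `x_i` with `x`
and `x_j` with `y`. -/
inductive PreRel (X : Str2 σ ar) : PlusCarrier X → PlusCarrier X → Prop
  | left (s : Sig2 σ ar) (p : { p : X.V × X.V // p ∈ X.rel s }) :
      PreRel X (Sum.inr ⟨s, p, s.2.1⟩) (Sum.inl p.1.1)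
  | right (s : Sig2 σ ar) (p : { p : X.V × X.V // p ∈ X.rel s }) :
      PreRel X (Sum.inr ⟨s, p, s.2.2⟩) (Sum.inl p.1.2)

/-- The functor `β*`, left adjoint to `β`. -/
def strBetaStar (X : Str2 σ ar) : Str σ ar where
  V := Quot (PreRel X)
  finiteV := by
    have : Finite X.V := X.finiteV
    exact Finite.of_surjective (Quot.mk (PreRel X)) (fun q => Quot.exists_rep q)
  rel := fun R => { t | ∃ (i j : Fin (ar R)) (p : X.V × X.V) (hp : p ∈ X.rel ⟨R, (i, j)⟩),
      t = fun m => Quot.mk (PreRel X) (Sum.inr ⟨⟨R, (i, j)⟩, ⟨p, hp⟩, m⟩) }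

/-- The `σ₂`-path `P_w` of a word `w ∈ σ₂*`. -/
def PathStr (w : List (Sig2 σ ar)) : Str2 σ ar where
  V := Fin (w.length + 1)
  finiteV := inferInstance
  rel := fun s => { p | ∃ t : Fin w.length, w.get t = s ∧ p = (t.castSucc, t.succ) }

/-- Acceptance of the word `w` by the `σ₂`-structure `X` viewed as a nondeterministic
automaton with initial states `I` and terminal states `T`. -/
def NAccepts (X : Str2 σ ar) (I T : Set X.V) (w : List (Sig2 σ ar)) : Prop :=
  ∃ f : Fin (w.length + 1) → X.V,
    (∀ (s : Sig2 σ ar) (p : Fin (w.length + 1) × Fin (w.length + 1)),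
        p ∈ (PathStr w).rel s → (f p.1, f p.2) ∈ X.rel s) ∧
    f 0 ∈ I ∧ f (Fin.last w.length) ∈ T

/-! Caterpillars. -/

/-- The blocks (hyperedges) of a `σ`-structure. -/
def Str.Block (A : Str σ ar) : Type := Σ R : σ, { t : Fin (ar R) → A.V // t ∈ A.rel R }

/-- The underlying simple graph of the incidence multigraph `Inc(A)`. -/
def IncGraph (A : Str σ ar) : SimpleGraph (A.V ⊕ A.Block) :=
  SimpleGraph.fromRel (fun u v =>
    ∃ (b : A.Block) (i : Fin (ar b.1)), u = Sum.inl (b.2.1 i) ∧ v = Sum.inr b)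

/-- `a` is a leaf when it has degree one in `Inc(A)`, i.e. there is exactly one
incidence `(block, coordinate)` at `a`. -/
def Str.IsLeaf (A : Str σ ar) (a : A.V) : Prop :=
  Nat.card { e : Σ b : A.Block, Fin (ar b.1) // e.1.2.1 e.2 = a } = 1

/-- A block is pendant when it is incident to at most one non-leaf. -/
def Str.IsPendant (A : Str σ ar) (b : A.Block) : Prop :=
  Set.Subsingleton { a : A.V | ¬ A.IsLeaf a ∧ ∃ i, b.2.1 i = a }

/-- A `σ`-tree: the incidence multigraph is connected, has no cycles and no parallel edges. -/
def Str.IsTreeStr (A : Str σ ar) : Prop :=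
  (∀ b : A.Block, Function.Injective b.2.1) ∧ (IncGraph A).IsTree

/-- A `σ`-path: a `σ`-tree with at most two pendant blocks. -/
def Str.IsPathStr (A : Str σ ar) : Prop :=
  A.IsTreeStr ∧ Nat.card { b : A.Block // A.IsPendant b } ≤ 2

/-- The vertices removed when pruning: leaves attached to pendant blocks only. -/
def Str.Removed (A : Str σ ar) (a : A.V) : Prop :=
  A.IsLeaf a ∧ ∀ b : A.Block, (∃ i, b.2.1 i = a) → A.IsPendant b

/-- The structure obtained by removing all pendant blocks and the leaves attached to them. -/
def prune (A : Str σ ar) : Str σ ar where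
  V := { a : A.V // ¬ A.Removed a }
  finiteV := by have : Finite A.V := A.finiteV; exact inferInstance
  rel := fun R => { t | ∃ (t₀ : Fin (ar R) → A.V) (h₀ : t₀ ∈ A.rel R),
      ¬ A.IsPendant ⟨R, t₀, h₀⟩ ∧ ∀ i, (t i : A.V) = t₀ i }

/-- A `σ`-caterpillar: a `σ`-tree which is a path or becomes one after removing all
pendant blocks and the leaves attached to them. -/
def Str.IsCaterpillar (A : Str σ ar) : Prop :=
  A.IsTreeStr ∧ (A.IsPathStr ∨ (prune A).IsPathStr)

/-! Dualities. -/

/-- `(O, A)` is a homomorphism duality. -/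
def IsDuality (O : Set (Str σ ar)) (A : Str σ ar) : Prop :=
  ∀ B : Str σ ar, B.Hom A ↔ ∀ T ∈ O, ¬ T.Hom B

/-- `A` has caterpillar duality. -/
def HasCatDuality (A : Str σ ar) : Prop :=
  ∃ O : Set (Str σ ar), (∀ T ∈ O, T.IsCaterpillar) ∧ IsDuality O A

/-- `A` has path duality. -/
def HasPathDuality (A : Str σ ar) : Prop :=
  ∃ O : Set (Str σ ar), (∀ T ∈ O, T.IsPathStr) ∧ IsDuality O A

/-! The construction `Γ` on a deterministic automaton. -/

/-- The structure `Γ(D, {q₀}, T)`: universe is the set of subsets of `V(D)` containing `q₀`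
and disjoint from `T`; `(X_1,…,X_k) ∈ R(Γ D)` iff for all `(i,j)` and all `a ∈ X_i`,
every `b` with `(a,b) ∈ R^(i,j)(D)` lies in `X_j`. -/
def GammaStr (D : Str2 σ ar) (q0 : D.V) (T : Set D.V) : Str σ ar where
  V := { X : Set D.V // q0 ∈ X ∧ ∀ x ∈ X, x ∉ T }
  finiteV := by have : Finite D.V := D.finiteV; exact inferInstance
  rel := fun R => { t | ∀ (i j : Fin (ar R)) (a : D.V), a ∈ (t i).1 →
      ∀ b : D.V, (a, b) ∈ D.rel ⟨R, (i, j)⟩ → b ∈ (t j).1 }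

theorem test : True := trivial
/-- A caterpillar Datalog program: monadic linear Datalog with at most one EDB per rule.
A rule `(ρᵢ, ρⱼ, ⟨R, (m, n)⟩)` reads: `a ∈ ρᵢ ← b ∈ ρⱼ and (x₁,…,x_k) ∈ R with x_m = a, x_n = b`. -/
structure CatProgram (σ : Type) (ar : σ → ℕ) : Type 1 where
  IDB : Type
  finIDB : Finite IDB
  init : IDB
  rules : Set (IDB × IDB × Sig2 σ ar)
  goals : Set IDB

variable {σ : Type} [Finite σ] {ar : σ → ℕ}

/-- The least interpretation of the IDBs on an input structure `B`:
`Derives P B ρ a` means `a ∈ ρ` is derivable. -/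
inductive Derives (P : CatProgram σ ar) (B : Str σ ar) : P.IDB → B.V → Prop
  | init (b : B.V) : Derives P B P.init b
  | step (ρi ρj : P.IDB) (R : σ) (m n : Fin (ar R)) (t : Fin (ar R) → B.V) :
      (ρi, ρj, ⟨R, (m, n)⟩) ∈ P.rules → t ∈ B.rel R → Derives P B ρj (t n) →
      Derives P B ρi (t m)

/-- The program achieves its goal on `B` when the body IDB of some goal rule is nonempty. -/
def AchievesGoal (P : CatProgram σ ar) (B : Str σ ar) : Prop :=
  ∃ ρ ∈ P.goals, ∃ a : B.V, Derives P B ρ a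

/-- The nondeterministic automaton of a caterpillar Datalog program: states are the IDBs,
with a transition `(ρⱼ, ρᵢ) ∈ R^(n,m)` for each rule
`a ∈ ρᵢ ← b ∈ ρⱼ and (x₁,…,x_k) ∈ R with x_m = a, x_n = b`. -/
def progAut (P : CatProgram σ ar) : Str2 σ ar where
  V := P.IDB
  finiteV := P.finIDB
  rel := fun s => { p | (p.2, p.1, ⟨s.1, (s.2.2, s.2.1)⟩) ∈ P.rules }

/-! A derivation of `a ∈ ρ` unfolds, rule by rule, into a word `w` together with a run of the
automaton of `P` from `ρ₁` to `ρ` and a walk labelled `w` in `β(B)` ending at `a`; conversely, any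
such pair of walks replays as a derivation, since `ρ₁` holds everywhere. Homomorphisms
`β*(P_w) → B` correspond to homomorphisms `P_w → β(B)` by the adjunction `β* ⊣ β`, and
homomorphisms out of `P_w` are exactly walks labelled `w`. -/

namespace Str2

variable {σ : Type} {ar : σ → ℕ} {X : Str2 σ ar} {w : List (Sig2 σ ar)}

inductive Walk (X : Str2 σ ar) : List (Sig2 σ ar) → X.V → X.V → Prop
  | nil (x : X.V) : Walk X [] x x
  | cons {s : Sig2 σ ar} {w : List (Sig2 σ ar)} {x y z : X.V} :
      (x, y) ∈ X.rel s → Walk X w y z → Walk X (s :: w) x z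

theorem Walk.concat {s : Sig2 σ ar} {x y z : X.V}
    (hw : X.Walk w x y) (hs : (y, z) ∈ X.rel s) : X.Walk (w ++ [s]) x z := by
  induction hw with
  | nil x => exact .cons hs (.nil z)
  | cons hxy _ ih => exact .cons hxy (ih hs)

def IsPathHom (X : Str2 σ ar) (w : List (Sig2 σ ar)) (f : Fin (w.length + 1) → X.V) : Prop :=
  ∀ t : Fin w.length, (f t.castSucc, f t.succ) ∈ X.rel (w.get t)

theorem isPathHom_iff {f : Fin (w.length + 1) → X.V} :
    X.IsPathHom w f ↔ ∀ (s : Sig2 σ ar) (p : (PathStr w).V × (PathStr w).V),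
      p ∈ (PathStr w).rel s → (f p.1, f p.2) ∈ X.rel s := by
  constructor
  · rintro hf s p ⟨t, rfl, rfl⟩
    exact hf t
  · exact fun hf t => hf _ _ ⟨t, rfl, rfl⟩

theorem isPathHom_cons_iff {s : Sig2 σ ar} {f : Fin (w.length + 2) → X.V} :
    X.IsPathHom (s :: w) f ↔ (f 0, f 1) ∈ X.rel s ∧ X.IsPathHom w (Fin.tail f) := by
  show (∀ t : Fin (w.length + 1), _) ↔ _
  rw [Fin.forall_fin_succ]
  rfl

theorem walk_iff_exists_isPathHom {x y : X.V} :
    X.Walk w x y ↔ ∃ f, X.IsPathHom w f ∧ f 0 = x ∧ f (Fin.last w.length) = y := by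
  induction w generalizing x with
  | nil =>
    constructor
    · rintro ⟨⟩
      exact ⟨fun _ => y, fun t => t.elim0, rfl, rfl⟩
    · rintro ⟨f, -, rfl, rfl⟩
      exact .nil _
  | cons s w ih =>
    constructor
    · rintro (_ | ⟨hs, hw⟩)
      obtain ⟨f, hf, rfl, rfl⟩ := ih.1 hw
      exact ⟨Fin.cons x f, isPathHom_cons_iff.2 ⟨hs, hf⟩, rfl, rfl⟩
    · rintro ⟨f, hf, rfl, rfl⟩
      obtain ⟨hs, hf⟩ := isPathHom_cons_iff.1 hf
      exact .cons hs (ih.2 ⟨Fin.tail f, hf, rfl, rfl⟩)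

theorem nAccepts_iff_exists_walk {I T : Set X.V} :
    NAccepts X I T w ↔ ∃ x ∈ I, ∃ y ∈ T, X.Walk w x y := by
  simp only [walk_iff_exists_isPathHom, isPathHom_iff]
  constructor
  · rintro ⟨f, hf, hI, hT⟩
    exact ⟨_, hI, _, hT, f, hf, rfl, rfl⟩
  · rintro ⟨_, hI, _, hT, f, hf, rfl, rfl⟩
    exact ⟨f, hf, hI, hT⟩

theorem pathStr_hom_iff_exists_walk : (PathStr w).Hom X ↔ ∃ x y, X.Walk w x y := by
  simp only [walk_iff_exists_isPathHom, isPathHom_iff]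
  constructor
  · rintro ⟨f, hf⟩
    exact ⟨_, _, f, hf, rfl, rfl⟩
  · rintro ⟨_, _, f, hf, rfl, rfl⟩
    exact ⟨f, hf⟩

end Str2

theorem strBetaStar_hom_iff {σ : Type} [Finite σ] {ar : σ → ℕ} {X : Str2 σ ar} {B : Str σ ar} :
    (strBetaStar X).Hom B ↔ X.Hom (strBeta B) := by
  constructor
  · rintro ⟨g, hg⟩
    refine ⟨fun x => g (Quot.mk _ (.inl x)), fun s p hp => ?_⟩
    exact ⟨fun m => g (Quot.mk _ (.inr ⟨s, ⟨p, hp⟩, m⟩)), hg _ _ ⟨s.2.1, s.2.2, p, hp, rfl⟩,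
      congrArg g (Quot.sound (.left s ⟨p, hp⟩)), congrArg g (Quot.sound (.right s ⟨p, hp⟩))⟩
  · rintro ⟨f, hf⟩
    choose τ hτ hτ₁ hτ₂ using hf
    let g : PlusCarrier X → B.V
      | .inl x => f x
      | .inr ⟨s, ⟨p, hp⟩, m⟩ => τ s p hp m
    refine ⟨Quot.lift g ?_, ?_⟩
    · rintro _ _ (⟨s, ⟨p, hp⟩⟩ | ⟨s, ⟨p, hp⟩⟩)
      exacts [hτ₁ s p hp, hτ₂ s p hp]
    · rintro R _ ⟨i, j, p, hp, rfl⟩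
      exact hτ _ p hp

section Program

variable {σ : Type} {ar : σ → ℕ} {P : CatProgram σ ar} {B : Str σ ar}

-- The states are typed through the structures so that `induction hP` can generalize them.
theorem derives_of_walk {w : List (Sig2 σ ar)} {ρ ρ' : (progAut P).V} {a a' : (strBeta B).V}
    (hd : Derives P B ρ a) (hP : (progAut P).Walk w ρ ρ') (hB : (strBeta B).Walk w a a') :
    Derives P B ρ' a' := by
  induction hP generalizing a with
  | nil =>
    cases hB
    exact hd
  | cons hρ _ ih =>
    obtain _ | ⟨⟨t, ht, rfl, rfl⟩, hB⟩ := hB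
    exact ih (.step _ _ _ _ _ t hρ ht hd) hB

theorem exists_walks_of_derives {ρ : P.IDB} {a : B.V} (hd : Derives P B ρ a) :
    ∃ w b, (progAut P).Walk w P.init ρ ∧ (strBeta B).Walk w b a := by
  induction hd with
  | init b => exact ⟨[], b, .nil _, .nil _⟩
  | step _ _ R m n t hrule ht _ ih =>
    obtain ⟨w, b, hP, hB⟩ := ih
    exact ⟨w ++ [⟨R, (n, m)⟩], b, hP.concat (s := ⟨R, (n, m)⟩) hrule,
      hB.concat ⟨t, ht, rfl, rfl⟩⟩

theorem derives_iff_exists_walks {ρ : P.IDB} {a : B.V} :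
    Derives P B ρ a ↔ ∃ w b, (progAut P).Walk w P.init ρ ∧ (strBeta B).Walk w b a :=
  ⟨exists_walks_of_derives, fun ⟨_, b, hP, hB⟩ => derives_of_walk (.init b) hP hB⟩

end Program

/-- a caterpillar Datalog program `P` achieves its goal on `B` iff some word
`w` accepted by its automaton `(C, {ρ₁}, T)` describes a caterpillar `β*(P_w)` admitting a
homomorphism to `B`. -/
theorem stmt_9 (σ : Type) [Finite σ] (ar : σ → ℕ) (P : CatProgram σ ar) (B : Str σ ar) :
    AchievesGoal P B ↔
      ∃ w : List (Sig2 σ ar), NAccepts (progAut P) {P.init} P.goals w ∧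
        (strBetaStar (PathStr w)).Hom B := by
  constructor
  · rintro ⟨ρ, hρ, a, hd⟩
    obtain ⟨w, b, hP, hB⟩ := derives_iff_exists_walks.1 hd
    exact ⟨w, Str2.nAccepts_iff_exists_walk.2 ⟨_, rfl, ρ, hρ, hP⟩,
      strBetaStar_hom_iff.2 (Str2.pathStr_hom_iff_exists_walk.2 ⟨b, a, hB⟩)⟩
  · rintro ⟨w, hw, hhom⟩
    obtain ⟨_, rfl, ρ, hρ, hP⟩ := Str2.nAccepts_iff_exists_walk.1 hw
    obtain ⟨b, a, hB⟩ := Str2.pathStr_hom_iff_exists_walk.1 (strBetaStar_hom_iff.1 hhom)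
    exact ⟨ρ, hρ, a, derives_iff_exists_walks.2 ⟨w, b, hP, hB⟩⟩
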